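/- arXiv:2203.03992 — 3 statements merged into one kernel-verified Lean document; each statement's English description precedes it below -/
import Mathlib

section
/- Let m be a positive integer and let X, Z be independent Gamma(m, rate m) random variables (density m^m/Γ(m) x^{m−1} e^{−mx}). For constants A > 0, B ≥ 0, T ≥ 0, with Γ(s, x) the upper incomplete gamma function: P(X > A·Z + B and Z > T) = e^{−mB} Σ_{p=0}^{m−1} Σ_{r=0}^{p} [C(p,r)/(p! Γ(m))] (mB)^{p−r} A^{r} (A+1)^{−(r+m)} Γ(r+m, m(A+1)T). -/
open MeasureTheory Real Set Finset

/-- The law of a unit-mean Gamma(m, rate m) power gain. -/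
noncomputable def nakLaw (m : ℝ) : Measure ℝ :=
  (volume.restrict (Ioi 0)).withDensity fun x =>
    ENNReal.ofReal (m ^ m / Real.Gamma m * x ^ (m - 1) * Real.exp (-m * x))

/-- The upper incomplete Gamma function Γ(a,b) = ∫_b^∞ t^{a−1} e^{−t} dt. -/
noncomputable def upperGamma (a b : ℝ) : ℝ :=
  ∫ t in Ioi b, t ^ (a - 1) * Real.exp (-t)

lemma aux_hasDerivAt (n : ℕ) (c : ℝ) (hc : 0 < c) (x : ℝ) :
    HasDerivAt (fun y => -(Real.exp (-c*y) * ∑ k ∈ Finset.range (n+1),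
        (n.factorial : ℝ)/(k.factorial * c^(n+1-k)) * y^k))
      (x^n * Real.exp (-c*x)) x := by
  have hE : HasDerivAt (fun y : ℝ => Real.exp (-c*y)) (Real.exp (-c*x) * (-c)) x := by
    have := ((hasDerivAt_id x).const_mul (-c)).exp
    simpa using this
  have hP : HasDerivAt (fun y : ℝ => ∑ k ∈ Finset.range (n+1),
      (n.factorial : ℝ)/(k.factorial * c^(n+1-k)) * y^k)
      (∑ k ∈ Finset.range (n+1),
        (n.factorial : ℝ)/(k.factorial * c^(n+1-k)) * (k * x^(k-1))) x := by
    apply HasDerivAt.fun_sum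
    intro k _
    exact (hasDerivAt_pow k x).const_mul _
  have h := (hE.mul hP).neg
  refine h.congr_deriv (Eq.symm ?_)
  have hfac : ∀ k : ℕ, (k.factorial : ℝ) ≠ 0 := fun k => Nat.cast_ne_zero.2 k.factorial_ne_zero
  have hc' : c ≠ 0 := hc.ne'
  -- goal: x^n * exp(-c*x) = -(exp(-c*x)*(-c) * P x + exp(-c*x) * P' x)
  have key : c * (∑ k ∈ Finset.range (n+1), (n.factorial : ℝ)/(k.factorial * c^(n+1-k)) * x^k)
      - (∑ k ∈ Finset.range (n+1), (n.factorial : ℝ)/(k.factorial * c^(n+1-k)) * (k * x^(k-1)))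
      = x^n := by
    rw [Finset.mul_sum, Finset.sum_range_succ, Finset.sum_range_succ' (fun k =>
      (n.factorial : ℝ)/(k.factorial * c^(n+1-k)) * (k * x^(k-1)))]
    have h1 : ∀ k ∈ Finset.range n,
        c * ((n.factorial : ℝ)/(k.factorial * c^(n+1-k)) * x^k)
        = (n.factorial : ℝ)/((k+1).factorial * c^(n+1-(k+1))) * ((k+1) * x^(k+1-1)) := by
      intro k hk
      have hk' : k < n := Finset.mem_range.1 hk
      have e1 : n + 1 - k = (n - k) + 1 := by omega
      have e2 : n + 1 - (k+1) = n - k := by omega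
      rw [e1, e2, Nat.factorial_succ, Nat.add_sub_cancel]
      push_cast
      field_simp
      ring
    rw [Finset.sum_congr rfl h1]
    simp [Nat.sub_self, pow_one]
    field_simp
  calc x^n * Real.exp (-c*x)
      = Real.exp (-c*x) * (c * (∑ k ∈ Finset.range (n+1), (n.factorial : ℝ)/(k.factorial * c^(n+1-k)) * x^k)
        - (∑ k ∈ Finset.range (n+1), (n.factorial : ℝ)/(k.factorial * c^(n+1-k)) * (k * x^(k-1)))) := by
        rw [key]; ring
    _ = _ := by ring

lemma aux_tendsto (n : ℕ) (c : ℝ) (hc : 0 < c) :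
    Filter.Tendsto (fun y => -(Real.exp (-c*y) * ∑ k ∈ Finset.range (n+1),
        (n.factorial : ℝ)/(k.factorial * c^(n+1-k)) * y^k)) Filter.atTop (nhds 0) := by
  have h : ∀ k : ℕ, Filter.Tendsto (fun y : ℝ => y^k * Real.exp (-c*y))
      Filter.atTop (nhds 0) := by
    intro k
    have h1 := tendsto_pow_mul_exp_neg_atTop_nhds_zero k
    have h2 : Filter.Tendsto (fun y : ℝ => c * y) Filter.atTop Filter.atTop :=
      Filter.Tendsto.const_mul_atTop hc Filter.tendsto_id
    have h3 := h1.comp h2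
    have h4 : Filter.Tendsto (fun y : ℝ => (c*y)^k * Real.exp (-(c*y)))
        Filter.atTop (nhds 0) := h3
    have h5 := h4.div_const (c^k)
    simp only [zero_div] at h5
    apply h5.congr'
    filter_upwards [Filter.eventually_ge_atTop (0:ℝ)] with y _
    rw [mul_pow, neg_mul]
    field_simp
  have := Filter.Tendsto.neg (tendsto_finset_sum (Finset.range (n+1))
    (fun k _ => ((h k).const_mul ((n.factorial : ℝ)/(k.factorial * c^(n+1-k))))))
  simp only [mul_zero, Finset.sum_const_zero, neg_zero] at this
  apply this.congr
  intro y
  rw [Finset.mul_sum]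
  congr 1
  exact Finset.sum_congr rfl fun k _ => by ring

lemma key_integral (n : ℕ) (c t : ℝ) (hc : 0 < c) (ht : 0 ≤ t) :
    IntegrableOn (fun x => x^n * Real.exp (-c*x)) (Ioi t) ∧
    ∫ x in Ioi t, x^n * Real.exp (-c*x) =
      Real.exp (-c*t) * ∑ k ∈ Finset.range (n+1),
        (n.factorial : ℝ)/(k.factorial * c^(n+1-k)) * t^k := by
  have hderiv : ∀ x ∈ Ici t, HasDerivAt (fun y => -(Real.exp (-c*y) * ∑ k ∈ Finset.range (n+1),
      (n.factorial : ℝ)/(k.factorial * c^(n+1-k)) * y^k)) (x^n * Real.exp (-c*x)) x :=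
    fun x _ => aux_hasDerivAt n c hc x
  have hpos : ∀ x ∈ Ioi t, 0 ≤ x^n * Real.exp (-c*x) := by
    intro x hx
    have : (0:ℝ) ≤ x := le_of_lt (lt_of_le_of_lt ht hx)
    positivity
  have htend := aux_tendsto n c hc
  refine ⟨integrableOn_Ioi_deriv_of_nonneg' hderiv hpos htend, ?_⟩
  rw [integral_Ioi_of_hasDerivAt_of_nonneg' hderiv hpos htend]
  ring

lemma upperGamma_nat (n : ℕ) (b : ℝ) (hb : 0 ≤ b) :
    upperGamma ((n:ℝ)+1) b = Real.exp (-b) *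
      ∑ k ∈ Finset.range (n+1), (n.factorial : ℝ)/(k.factorial) * b^k := by
  rw [upperGamma]
  have h1 : ∀ t : ℝ, t ^ (((n:ℝ)+1) - 1) * Real.exp (-t) = t^n * Real.exp (-(1:ℝ)*t) := by
    intro t
    rw [show ((n:ℝ)+1) - 1 = ((n:ℕ):ℝ) by ring, Real.rpow_natCast]
    norm_num
  simp_rw [h1]
  rw [(key_integral n 1 b one_pos hb).2]
  simp

lemma nakLaw_Ioi (m : ℕ) (hm : 0 < m) (t : ℝ) (ht : 0 ≤ t) :
    nakLaw m (Ioi t) = ENNReal.ofReal (Real.exp (-(m:ℝ)*t) *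
      ∑ p ∈ Finset.range m, ((m:ℝ)*t)^p / p.factorial) := by
  have hm1 : ((m:ℝ)) - 1 = ((m-1:ℕ):ℝ) := by
    push_cast [Nat.cast_sub hm]; ring
  have hGamma : Real.Gamma (m:ℝ) = ((m-1).factorial : ℝ) := by
    rw [show ((m:ℝ)) = ((m-1:ℕ):ℝ) + 1 by rw [← hm1]; ring, Real.Gamma_nat_eq_factorial]
  have hrpow : ((m:ℝ)) ^ ((m:ℝ)) = ((m:ℝ)) ^ (m:ℕ) := Real.rpow_natCast _ _
  rw [nakLaw, withDensity_apply _ measurableSet_Ioi,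
    Measure.restrict_restrict measurableSet_Ioi, Set.Ioi_inter_Ioi,
    max_eq_left ht]
  have hfun : ∀ x : ℝ, (m:ℝ)^(m:ℝ)/Real.Gamma m * x ^ ((m:ℝ)-1) * Real.exp (-(m:ℝ)*x)
      = (m:ℝ)^(m:ℕ)/((m-1).factorial : ℝ) * (x ^ (m-1:ℕ) * Real.exp (-(m:ℝ)*x)) := by
    intro x
    rw [hm1, hGamma, hrpow, Real.rpow_natCast]; ring
  simp_rw [hfun]
  have hInt := (key_integral (m-1) m t (by exact_mod_cast hm) ht)
  rw [← ofReal_integral_eq_lintegral_ofReal (hInt.1.const_mul _)]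
  · congr 1
    rw [MeasureTheory.integral_const_mul, hInt.2]
    have hrange : (m-1) + 1 = m := by omega
    rw [hrange, mul_left_comm]
    congr 1
    rw [Finset.mul_sum]
    refine Finset.sum_congr rfl fun k hk => ?_
    have hk' : k < m := Finset.mem_range.1 hk
    rw [mul_pow]
    have hpow : ((m:ℝ))^(m-k) * ((m:ℝ))^k = ((m:ℝ))^(m:ℕ) := by
      rw [← pow_add]; congr 1; omega
    have hmne : ((m:ℝ)) ≠ 0 := by positivity
    have h1 : ((m-1).factorial : ℝ) ≠ 0 := Nat.cast_ne_zero.2 (Nat.factorial_ne_zero _)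
    have h2 : ((k).factorial : ℝ) ≠ 0 := Nat.cast_ne_zero.2 (Nat.factorial_ne_zero _)
    field_simp
    rw [← hpow]
    ring
  · filter_upwards [ae_restrict_mem measurableSet_Ioi] with x hx
    have hx0 : (0:ℝ) ≤ x := le_of_lt (lt_of_le_of_lt ht hx)
    positivity

lemma integral_upperGamma (n : ℕ) (c T : ℝ) (hc : 0 < c) (hT : 0 ≤ T) :
    ∫ z in Ioi T, z^n * Real.exp (-c*z) = (1/c^(n+1)) * upperGamma ((n:ℝ)+1) (c*T) := by
  rw [(key_integral n c T hc hT).2, upperGamma_nat n (c*T) (by positivity)]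
  rw [mul_left_comm]
  congr 1
  · rw [neg_mul]
  rw [Finset.mul_sum]
  refine Finset.sum_congr rfl fun k hk => ?_
  have hk' : k ≤ n := Nat.lt_succ_iff.1 (Finset.mem_range.1 hk)
  have hpow : c^(n+1-k) * c^k = c^(n+1) := by rw [← pow_add]; congr 1; omega
  have h2 : ((k).factorial : ℝ) ≠ 0 := Nat.cast_ne_zero.2 (Nat.factorial_ne_zero _)
  rw [mul_pow]
  field_simp
  rw [← hpow]
  ring

/-- Theorem 2 core computation: for i.i.d. Gamma(m,m) power gains X, Z and A > 0,
B ≥ 0, T ≥ 0, the joint probability P(X > AZ + B, Z > T) equals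
e^{−mB} Σ_{p=0}^{m−1} Σ_{r=0}^{p} [C(p,r)/(p! Γ(m))] (mB)^{p−r} A^{r} (A+1)^{−(r+m)}
Γ(r+m, m(A+1)T). -/
theorem outage_complement_theorem2 {Ω : Type*} [MeasurableSpace Ω]
    (P : Measure Ω) [IsProbabilityMeasure P] (m : ℕ) (hm : 0 < m)
    (X Z : Ω → ℝ) (hXmeas : Measurable X) (hZmeas : Measurable Z)
    (hindep : ProbabilityTheory.IndepFun X Z P)
    (hX : Measure.map X P = nakLaw m) (hZ : Measure.map Z P = nakLaw m)
    (A B T : ℝ) (hA : 0 < A) (hB : 0 ≤ B) (hT : 0 ≤ T) :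
    (P {ω | A * Z ω + B < X ω ∧ T < Z ω}).toReal =
      Real.exp (-(m : ℝ) * B) *
        ∑ p ∈ Finset.range m, ∑ r ∈ Finset.range (p + 1),
          (p.choose r : ℝ) / ((Nat.factorial p : ℝ) * Real.Gamma m) *
            ((m : ℝ) * B) ^ (p - r) * A ^ r / (A + 1) ^ (r + m) *
              upperGamma ((r : ℝ) + m) ((m : ℝ) * (A + 1) * T) := by
  haveI hprob : IsProbabilityMeasure (nakLaw (m:ℝ)) :=
    hX ▸ Measure.isProbabilityMeasure_map hXmeas.aemeasurable
  set S : Set (ℝ × ℝ) := {q : ℝ × ℝ | A * q.1 + B < q.2 ∧ T < q.1} with hS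
  have hSmeas : MeasurableSet S :=
    (measurableSet_lt ((measurable_fst.const_mul A).add_const B) measurable_snd).inter
      (measurableSet_lt measurable_const measurable_fst)
  have hpair : Measurable (fun ω => (Z ω, X ω)) := hZmeas.prodMk hXmeas
  have hmap : Measure.map (fun ω => (Z ω, X ω)) P = (nakLaw m).prod (nakLaw m) := by
    rw [(ProbabilityTheory.indepFun_iff_map_prod_eq_prod_map_map hZmeas.aemeasurable
      hXmeas.aemeasurable).1 hindep.symm, hZ, hX]
  have h1 : P {ω | A * Z ω + B < X ω ∧ T < Z ω} = ((nakLaw m).prod (nakLaw m)) S := by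
    rw [← hmap, Measure.map_apply hpair hSmeas]
    rfl
  rw [h1, Measure.prod_apply hSmeas]
  -- slices
  have hslice : (fun z => nakLaw m (Prod.mk z ⁻¹' S))
      = (Ioi T).indicator (fun z => nakLaw m (Ioi (A*z+B))) := by
    funext z
    by_cases h : T < z
    · rw [Set.indicator_of_mem (Set.mem_Ioi.2 h)]
      congr 1
      ext x
      simp [hS, h, Set.mem_Ioi]
    · rw [Set.indicator_of_notMem (by simpa using h)]
      have : Prod.mk z ⁻¹' S = (∅ : Set ℝ) := by
        ext x; simp [hS, h]
      rw [this]; simp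
  rw [show ∫⁻ z, (nakLaw ↑m) (Prod.mk z ⁻¹' S) ∂(nakLaw ↑m)
      = ∫⁻ z in Ioi T, nakLaw ↑m (Ioi (A*z+B)) ∂(nakLaw ↑m) from by
    rw [hslice]; exact lintegral_indicator measurableSet_Ioi _]
  -- substitute the survival function
  have hsurv : ∫⁻ z in Ioi T, nakLaw ↑m (Ioi (A*z+B)) ∂(nakLaw ↑m)
      = ∫⁻ z in Ioi T, ENNReal.ofReal (Real.exp (-(m:ℝ)*(A*z+B)) *
          ∑ p ∈ Finset.range m, ((m:ℝ)*(A*z+B))^p / p.factorial) ∂(nakLaw ↑m) := by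
    refine setLIntegral_congr_fun measurableSet_Ioi (fun z hz => ?_)
    have hz0 : 0 ≤ A*z+B := by
      have : (0:ℝ) ≤ z := le_trans hT (le_of_lt hz)
      positivity
    exact nakLaw_Ioi m hm _ hz0
  rw [hsurv]
  set C : ℝ := (m:ℝ)^(m:ℕ)/((m-1).factorial : ℝ) with hC
  set cf : ℕ → ℕ → ℝ := fun p r => Real.exp (-(m:ℝ)*B) * C * (p.choose r : ℝ) *
    ((m:ℝ)*B)^(p-r) * ((m:ℝ)*A)^r / (p.factorial : ℝ) with hcf
  set ψ : ℝ → ℝ := fun z => ∑ p ∈ Finset.range m, ∑ r ∈ Finset.range (p+1),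
    cf p r * (z^(m-1+r) * Real.exp (-((m:ℝ)*(A+1))*z)) with hψ
  have hm1 : ((m:ℝ)) - 1 = ((m-1:ℕ):ℝ) := by
    push_cast [Nat.cast_sub hm]; ring
  have hGamma : Real.Gamma (m:ℝ) = ((m-1).factorial : ℝ) := by
    rw [show ((m:ℝ)) = ((m-1:ℕ):ℝ) + 1 by rw [← hm1]; ring, Real.Gamma_nat_eq_factorial]
  have hfun : ∀ x : ℝ, (m:ℝ)^(m:ℝ)/Real.Gamma m * x ^ ((m:ℝ)-1) * Real.exp (-(m:ℝ)*x)
      = C * (x ^ (m-1:ℕ) * Real.exp (-(m:ℝ)*x)) := by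
    intro x
    rw [hm1, hGamma, Real.rpow_natCast, Real.rpow_natCast, hC]; ring
  have hfmeas : Measurable (fun x : ℝ => ENNReal.ofReal
      ((m:ℝ)^(m:ℝ)/Real.Gamma m * x ^ ((m:ℝ)-1) * Real.exp (-(m:ℝ)*x))) := by
    fun_prop
  have hgmeas : Measurable (fun z : ℝ => ENNReal.ofReal (Real.exp (-(m:ℝ)*(A*z+B)) *
      ∑ p ∈ Finset.range m, ((m:ℝ)*(A*z+B))^p / p.factorial)) := by
    fun_prop
  rw [show nakLaw (m:ℝ) = (volume.restrict (Ioi 0)).withDensity fun x =>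
      ENNReal.ofReal ((m:ℝ)^(m:ℝ)/Real.Gamma m * x ^ ((m:ℝ)-1) * Real.exp (-(m:ℝ)*x)) from rfl]
  rw [setLIntegral_withDensity_eq_setLIntegral_mul _ hfmeas hgmeas measurableSet_Ioi]
  rw [Measure.restrict_restrict measurableSet_Ioi, Set.Ioi_inter_Ioi, max_eq_left hT]
  have hexp : ∀ z : ℝ, Real.exp (-(m:ℝ)*z) * Real.exp (-(m:ℝ)*(A*z+B))
      = Real.exp (-((m:ℝ)*(A+1))*z) * Real.exp (-(m:ℝ)*B) := by
    intro z; rw [← Real.exp_add, ← Real.exp_add]; congr 1; ring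
  have halg : ∀ z : ℝ, C * (z ^ (m-1:ℕ) * Real.exp (-(m:ℝ)*z)) *
      (Real.exp (-(m:ℝ)*(A*z+B)) * ∑ p ∈ Finset.range m, ((m:ℝ)*(A*z+B))^p / p.factorial)
      = ψ z := by
    intro z
    rw [hψ, Finset.mul_sum, Finset.mul_sum]
    refine Finset.sum_congr rfl fun p _ => ?_
    rw [show (m:ℝ)*(A*z+B) = (m:ℝ)*A*z + (m:ℝ)*B by ring, add_pow]
    rw [Finset.sum_div, Finset.mul_sum, Finset.mul_sum]
    refine Finset.sum_congr rfl fun r _ => ?_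
    rw [hcf]
    linear_combination (C * z^(m-1:ℕ) * (((m:ℝ)*A)^r * z^r * ((m:ℝ)*B)^(p-r) *
      (p.choose r : ℝ) / (p.factorial:ℝ))) * hexp z
  have hcong : ∫⁻ z in Ioi T, ((fun x : ℝ => ENNReal.ofReal
        ((m:ℝ)^(m:ℝ)/Real.Gamma m * x ^ ((m:ℝ)-1) * Real.exp (-(m:ℝ)*x))) *
        (fun z : ℝ => ENNReal.ofReal (Real.exp (-(m:ℝ)*(A*z+B)) *
        ∑ p ∈ Finset.range m, ((m:ℝ)*(A*z+B))^p / p.factorial))) z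
      = ∫⁻ z in Ioi T, ENNReal.ofReal (ψ z) := by
    refine setLIntegral_congr_fun measurableSet_Ioi (fun z hz => ?_)
    have hz0 : (0:ℝ) ≤ z := le_trans hT (le_of_lt hz)
    rw [Pi.mul_apply, hfun z, ← ENNReal.ofReal_mul (by positivity), halg z]
  rw [hcong]
  have hcpos : (0:ℝ) < (m:ℝ)*(A+1) := by positivity
  have hint : ∀ p r : ℕ, IntegrableOn
      (fun z : ℝ => cf p r * (z^(m-1+r) * Real.exp (-((m:ℝ)*(A+1))*z))) (Ioi T) :=
    fun p r => (key_integral (m-1+r) ((m:ℝ)*(A+1)) T hcpos hT).1.const_mul _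
  have hintψ : IntegrableOn ψ (Ioi T) := by
    rw [hψ]
    exact integrable_finset_sum _ fun p _ => integrable_finset_sum _ fun r _ => hint p r
  have hnn : 0 ≤ᵐ[volume.restrict (Ioi T)] ψ := by
    filter_upwards [ae_restrict_mem measurableSet_Ioi] with z hz
    have hz0 : (0:ℝ) ≤ z := le_trans hT (le_of_lt hz)
    have : (0:ℝ) ≤ C := by rw [hC]; positivity
    refine Finset.sum_nonneg fun p _ => Finset.sum_nonneg fun r _ => ?_
    rw [hcf]
    positivity
  rw [← ofReal_integral_eq_lintegral_ofReal hintψ hnn,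
    ENNReal.toReal_ofReal (integral_nonneg_of_ae hnn)]
  have hval : ∫ z in Ioi T, ψ z = ∑ p ∈ Finset.range m, ∑ r ∈ Finset.range (p+1),
      cf p r * ((1/((m:ℝ)*(A+1))^(m-1+r+1)) *
        upperGamma (((m-1+r:ℕ):ℝ)+1) ((m:ℝ)*(A+1)*T)) := by
    rw [hψ, integral_finset_sum _ fun p _ => integrable_finset_sum _ fun r _ => hint p r]
    refine Finset.sum_congr rfl fun p _ => ?_
    rw [integral_finset_sum _ fun r _ => hint p r]
    refine Finset.sum_congr rfl fun r _ => ?_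
    rw [MeasureTheory.integral_const_mul, integral_upperGamma (m-1+r) ((m:ℝ)*(A+1)) T hcpos hT]
  rw [hval, Finset.mul_sum]
  refine Finset.sum_congr rfl fun p _ => ?_
  rw [Finset.mul_sum]
  refine Finset.sum_congr rfl fun r _ => ?_
  have harg : ((m-1+r:ℕ):ℝ)+1 = (r:ℝ)+(m:ℝ) := by
    push_cast [Nat.cast_sub hm]; ring
  have hexp2 : m-1+r+1 = r+m := by omega
  rw [harg, hexp2, hcf, hC, hGamma]
  have hmne : ((m:ℝ)) ≠ 0 := by positivity
  have hA1 : (A+1) ≠ 0 := by positivity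
  have h1 : ((m-1).factorial : ℝ) ≠ 0 := Nat.cast_ne_zero.2 (Nat.factorial_ne_zero _)
  have h2 : ((p).factorial : ℝ) ≠ 0 := Nat.cast_ne_zero.2 (Nat.factorial_ne_zero _)
  have hpow : ((m:ℝ))^(m:ℕ) * ((m:ℝ))^r = ((m:ℝ))^(r+m) := by
    rw [← pow_add]; congr 1; omega
  rw [mul_pow, mul_pow]
  field_simp
  rw [← hpow]
  ring
end

section
/- Let X and Y be independent random variables each with density f(x) = m^m/Γ(m) x^{m−1} e^{−mx} on (0,∞), with m > 0 real. Then Z = XY has density f_Z(z) = (2 m^{2m}/Γ(m)²) z^{m−1} K_0(2m√z) for z > 0, where K_0 is the modified Bessel function of the second kind of order 0. -/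
open MeasureTheory Real Set

/-- K₀, the modified Bessel function of the second kind of order 0,
via its integral representation K₀(x) = ∫_0^∞ e^{−x cosh t} dt. -/
noncomputable def besselK0 (x : ℝ) : ℝ :=
  ∫ t in Ioi (0:ℝ), Real.exp (-x * Real.cosh t)

/-! The law of `XY` is the multiplicative convolution of the two laws, whose density on `(0, ∞)`
is the Mellin convolution `z ↦ ∫₀^∞ f(x) f(z/x) dx/x`. For the Nakagami density the integrand is
a constant times `x⁻¹ exp(-m (x + z/x))`, and the substitution `x = √z eᵗ` turns `x + z/x` into
`2 √z cosh t`, so the integral is twice the integral representation of `K₀(2 m √z)`. -/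

open scoped ENNReal

theorem lintegral_eq_two_mul_setLIntegral_Ioi_of_even {h : ℝ → ℝ≥0∞} (he : ∀ x, h (-x) = h x) :
    ∫⁻ x, h x = 2 * ∫⁻ x in Ioi 0, h x := by
  have hIic : ∫⁻ x in Iic 0, h x = ∫⁻ x in Ioi 0, h x := by
    have := (Measure.measurePreserving_neg volume).setLIntegral_comp_emb
      (Homeomorph.neg ℝ).measurableEmbedding h (Ici 0)
    simp only [he, image_neg_Ici, neg_zero] at this
    rw [setLIntegral_congr Ioi_ae_eq_Ici, this]
  rw [← lintegral_add_compl _ (measurableSet_Ioi (a := (0 : ℝ))), compl_Ioi, hIic, two_mul]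

theorem lintegral_Ioi_eq_lintegral_comp_mul_exp {c : ℝ} (hc : 0 < c) (G : ℝ → ℝ≥0∞) :
    ∫⁻ x in Ioi 0, G x = ∫⁻ t, ENNReal.ofReal (c * exp t) * G (c * exp t) := by
  have himage : (fun t => c * exp t) '' univ = Ioi 0 := by
    rw [← image_image (c * ·) exp univ, image_univ, range_exp, image_const_mul_Ioi_zero hc]
  rw [← himage, lintegral_image_eq_lintegral_abs_deriv_mul MeasurableSet.univ
    (fun t _ => ((hasDerivAt_exp t).const_mul c).hasDerivWithinAt)
    (fun s _ t _ hst => exp_injective (mul_left_cancel₀ hc.ne' hst)), Measure.restrict_univ]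
  simp_rw [abs_of_pos (mul_pos hc (exp_pos _))]

theorem lintegral_Ioi_eq_lintegral_Ioi_comp_div {b : ℝ} (hb : 0 < b) (G : ℝ → ℝ≥0∞) :
    ∫⁻ y in Ioi 0, G y = ∫⁻ z in Ioi 0, ENNReal.ofReal b⁻¹ * G (z / b) := by
  nth_rw 1 [← image_const_mul_Ioi_zero (inv_pos.2 hb)]
  rw [lintegral_image_eq_lintegral_abs_deriv_mul
    measurableSet_Ioi (fun z _ => (hasDerivAt_const_mul b⁻¹).hasDerivWithinAt)
    (mul_right_injective₀ (inv_ne_zero hb.ne')).injOn, abs_of_pos (inv_pos.2 hb)]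
  simp_rw [div_eq_inv_mul]

theorem mconv_withDensity_restrict_Ioi {f g : ℝ → ℝ≥0∞} (hf : Measurable f) (hg : Measurable g) :
    (volume.restrict (Ioi 0)).withDensity f ∗ₘ (volume.restrict (Ioi 0)).withDensity g =
      (volume.restrict (Ioi 0)).withDensity
        (fun z => ∫⁻ x in Ioi 0, f x * ENNReal.ofReal x⁻¹ * g (z / x)) := by
  refine Measure.ext_of_lintegral _ fun φ hφ => ?_
  have hdens : Measurable fun z => ∫⁻ x in Ioi 0, f x * ENNReal.ofReal x⁻¹ * g (z / x) :=
    Measurable.lintegral_prod_left (by fun_prop)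
  have hinner : ∀ x ∈ Ioi (0 : ℝ), ∫⁻ y in Ioi 0, f x * g y * φ (x * y) =
      ∫⁻ z in Ioi 0, f x * ENNReal.ofReal x⁻¹ * g (z / x) * φ z := by
    intro x hx
    rw [lintegral_Ioi_eq_lintegral_Ioi_comp_div hx]
    refine lintegral_congr fun z => ?_
    rw [mul_div_cancel₀ z hx.ne']
    ring
  rw [Measure.lintegral_mconv_eq_lintegral_prod hφ, prod_withDensity hf hg,
    lintegral_withDensity_eq_lintegral_mul _ (by fun_prop) (by fun_prop),
    lintegral_prod _ (by fun_prop)]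
  simp only [Pi.mul_apply]
  rw [setLIntegral_congr_fun measurableSet_Ioi hinner,
    lintegral_lintegral_swap (by fun_prop),
    lintegral_withDensity_eq_lintegral_mul _ hdens hφ]
  exact lintegral_congr fun z => lintegral_mul_const _ (by fun_prop)

theorem integrableOn_exp_neg_mul_cosh {a : ℝ} (ha : 0 < a) :
    IntegrableOn (fun t => exp (-a * cosh t)) (Ioi 0) := by
  refine (exp_neg_integrableOn_Ioi 0 ha).mono' (by fun_prop) ?_
  filter_upwards [ae_restrict_mem measurableSet_Ioi] with t ht
  have h : t ≤ cosh t := (self_le_sinh_iff.2 (le_of_lt ht)).trans (sinh_lt_cosh t).le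
  rw [norm_of_nonneg (exp_pos _).le]
  exact exp_le_exp.2 (by nlinarith)

theorem ofReal_besselK0 {a : ℝ} (ha : 0 < a) :
    ENNReal.ofReal (besselK0 a) = ∫⁻ t in Ioi 0, ENNReal.ofReal (exp (-a * cosh t)) :=
  ofReal_integral_eq_lintegral_ofReal (integrableOn_exp_neg_mul_cosh ha)
    (.of_forall fun _ => (exp_pos _).le)

theorem lintegral_inv_mul_exp_eq_two_mul_besselK0 {a z : ℝ} (ha : 0 < a) (hz : 0 < z) :
    ∫⁻ x in Ioi 0, ENNReal.ofReal (x⁻¹ * exp (-(a * (x + z / x)))) =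
      2 * ENNReal.ofReal (besselK0 (2 * a * √z)) := by
  have hc : 0 < √z := sqrt_pos.2 hz
  have hsubst (t : ℝ) : ENNReal.ofReal (√z * exp t) *
      ENNReal.ofReal ((√z * exp t)⁻¹ * exp (-(a * (√z * exp t + z / (√z * exp t))))) =
      ENNReal.ofReal (exp (-(2 * a * √z) * cosh t)) := by
    rw [← ENNReal.ofReal_mul (by positivity), mul_inv_cancel_left₀ (by positivity)]
    congr 2
    nth_rw 2 [← mul_self_sqrt hz.le]
    rw [cosh_eq, exp_neg]
    field_simp
  rw [lintegral_Ioi_eq_lintegral_comp_mul_exp hc]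
  simp_rw [hsubst]
  rw [lintegral_eq_two_mul_setLIntegral_Ioi_of_even (fun t => by rw [cosh_neg]),
    ofReal_besselK0 (by positivity)]

noncomputable def nakagamiPDF (m x : ℝ) : ℝ :=
  m ^ m / Gamma m * x ^ (m - 1) * exp (-m * x)

theorem nakagamiPDF_nonneg {m x : ℝ} (hm : 0 < m) (hx : 0 ≤ x) : 0 ≤ nakagamiPDF m x := by
  have := Gamma_pos_of_pos hm
  unfold nakagamiPDF
  positivity

theorem nakagamiPDF_mul_inv_mul_nakagamiPDF_div {m x z : ℝ} (hm : 0 < m) (hx : 0 < x)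
    (hz : 0 ≤ z) :
    nakagamiPDF m x * x⁻¹ * nakagamiPDF m (z / x) =
      m ^ (2 * m) / Gamma m ^ 2 * z ^ (m - 1) * (x⁻¹ * exp (-(m * (x + z / x)))) := by
  have hexp : exp (-(m * (x + z / x))) = exp (-m * x) * exp (-m * (z / x)) := by
    rw [← exp_add]; ring_nf
  have hpow : m ^ (2 * m) = m ^ m * m ^ m := by
    rw [← rpow_add hm]; ring_nf
  rw [nakagamiPDF, nakagamiPDF, hexp, hpow, div_rpow hz hx.le]
  field_simp

theorem lintegral_nakagamiPDF_mul_nakagamiPDF_div {m z : ℝ} (hm : 0 < m) (hz : 0 < z) :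
    ∫⁻ x in Ioi 0, ENNReal.ofReal (nakagamiPDF m x) * ENNReal.ofReal x⁻¹ *
        ENNReal.ofReal (nakagamiPDF m (z / x)) =
      ENNReal.ofReal (2 * m ^ (2 * m) / Gamma m ^ 2 * z ^ (m - 1) *
        besselK0 (2 * m * √z)) := by
  have hC : 0 ≤ m ^ (2 * m) / Gamma m ^ 2 * z ^ (m - 1) := by positivity
  have hintegrand : ∀ x ∈ Ioi (0 : ℝ), ENNReal.ofReal (nakagamiPDF m x) * ENNReal.ofReal x⁻¹ *
      ENNReal.ofReal (nakagamiPDF m (z / x)) =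
      ENNReal.ofReal (m ^ (2 * m) / Gamma m ^ 2 * z ^ (m - 1)) *
        ENNReal.ofReal (x⁻¹ * exp (-(m * (x + z / x)))) := by
    intro x hx
    have hpdf := nakagamiPDF_nonneg hm (le_of_lt hx)
    rw [← ENNReal.ofReal_mul hpdf, ← ENNReal.ofReal_mul (mul_nonneg hpdf (inv_nonneg.2 hx.le)),
      ← ENNReal.ofReal_mul hC, nakagamiPDF_mul_inv_mul_nakagamiPDF_div hm hx hz.le]
  rw [setLIntegral_congr_fun measurableSet_Ioi hintegrand, lintegral_const_mul' _ _
    ENNReal.ofReal_ne_top, lintegral_inv_mul_exp_eq_two_mul_besselK0 hm hz,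
    ← ENNReal.ofReal_ofNat 2, ← ENNReal.ofReal_mul zero_le_two, ← ENNReal.ofReal_mul hC]
  ring_nf

theorem nakLaw_mconv_nakLaw {m : ℝ} (hm : 0 < m) :
    nakLaw m ∗ₘ nakLaw m = (volume.restrict (Ioi 0)).withDensity fun z =>
      ENNReal.ofReal (2 * m ^ (2 * m) / Gamma m ^ 2 * z ^ (m - 1) * besselK0 (2 * m * √z)) := by
  rw [nakLaw, mconv_withDensity_restrict_Ioi (by fun_prop) (by fun_prop)]
  refine withDensity_congr_ae ?_
  filter_upwards [ae_restrict_mem measurableSet_Ioi] with z hz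
  exact lintegral_nakagamiPDF_mul_nakagamiPDF_div hm hz

/-- Lemma 2: the product Z = XY of two independent Nakagami-m power gains has density
f_Z(z) = (2 m^{2m}/Γ(m)²) z^{m−1} K₀(2m√z) on (0,∞). -/
theorem product_nakagami_density {Ω : Type*} [MeasurableSpace Ω]
    (P : Measure Ω) [IsProbabilityMeasure P] (m : ℝ) (hm : 0 < m)
    (X Y : Ω → ℝ) (hXmeas : Measurable X) (hYmeas : Measurable Y)
    (hindep : ProbabilityTheory.IndepFun X Y P)
    (hX : Measure.map X P = nakLaw m) (hY : Measure.map Y P = nakLaw m) :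
    Measure.map (fun ω => X ω * Y ω) P =
      (volume.restrict (Ioi 0)).withDensity fun z =>
        ENNReal.ofReal (2 * m ^ (2 * m) / (Real.Gamma m) ^ 2 * z ^ (m - 1) *
          besselK0 (2 * m * Real.sqrt z)) := by
  rw [show (fun ω => X ω * Y ω) = X * Y from rfl, hindep.map_mul_eq_map_mconv_map hXmeas hYmeas,
    hX, hY, nakLaw_mconv_nakLaw hm]
end

section
/- In the high-SNR limit, the outage probability of Theorem 1 tends to a nonzero floor for the far user: with X, Z independent Gamma(m, m) variables and fixed A > 0, lim_{B_0 → 0} P(X < A Z + B_0) = P(X < A Z) = 1 − Σ_{r=0}^{m−1} C(m−1+r, r) A^r / (A+1)^{m+r} > 0. Equivalently, P(X ≥ A Z) = Σ_{r=0}^{m−1} Γ(m+r)/(Γ(m) r!) · A^r/(A+1)^{m+r}. -/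
open MeasureTheory Real Set Finset Filter

/-!
For integer `m = n + 1`, `nakLaw m` is the Erlang law of shape `n + 1` and rate `c = n + 1`, whose
tail is the Poisson sum `P(X ≥ t) = ∑_{k ≤ n} e^{-ct} (ct)^k / k!` (its derivative telescopes to
minus the density). Conditioning on `Z`, `P(AZ ≤ X) = ∫ f(z) P(X ≥ Az) dz` is a finite sum of Gamma
integrals `∫ z^{n+r} e^{-c(A+1)z} dz`, which produce the negative-binomial terms. The limit
`B₀ → 0⁺` is continuity from above, `⋂_{B₀ > 0} {X < AZ + B₀} = {X ≤ AZ}`, and the tie `{X = AZ}`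
is null because the law of `X` has no atoms. The floor is positive because `{X < AZ}` contains the
rectangle `(0, 1) × (1/A, ∞)`, which has positive mass.
-/

open Topology
open scoped Nat

theorem ProbabilityTheory.IndepFun.measure_prodMk_preimage {Ω α β : Type*} [MeasurableSpace Ω]
    [MeasurableSpace α] [MeasurableSpace β] {P : Measure Ω} [IsFiniteMeasure P] {X : Ω → α}
    {Z : Ω → β} (hXZ : IndepFun X Z P) (hX : Measurable X) (hZ : Measurable Z)
    {s : Set (α × β)} (hs : MeasurableSet s) :
    P ((fun ω => (X ω, Z ω)) ⁻¹' s) = (P.map X).prod (P.map Z) s := by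
  rw [← hXZ.map_prod_eq_prod_map_map hX.aemeasurable hZ.aemeasurable,
    Measure.map_apply (hX.prodMk hZ) hs]

theorem MeasureTheory.Measure.prod_setOf_fst_eq_eq_zero {α β : Type*} [MeasurableSpace α]
    [MeasurableSpace β] [MeasurableEq α] {μ : Measure α} [NullSingletonClass μ] [SFinite μ]
    {ν : Measure β} [SFinite ν] {f : β → α} (hf : Measurable f) :
    μ.prod ν {p | p.1 = f p.2} = 0 := by
  have hs : MeasurableSet {p : α × β | p.1 = f p.2} :=
    measurableSet_eq_fun measurable_fst (hf.comp measurable_snd)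
  rw [Measure.prod_apply_symm hs]
  simp

theorem measure_setOf_le_eq_measure_setOf_lt {Ω α : Type*} [MeasurableSpace Ω] [PartialOrder α]
    {P : Measure Ω} {U V : Ω → α} (h : P {ω | U ω = V ω} = 0) :
    P {ω | U ω ≤ V ω} = P {ω | U ω < V ω} := by
  rw [← measure_sdiff_null h]
  congr 1
  ext ω
  simp [lt_iff_le_and_ne]

theorem tendsto_measure_setOf_lt_add_nhdsGT {Ω : Type*} [MeasurableSpace Ω] {P : Measure Ω}
    [IsFiniteMeasure P] {U V : Ω → ℝ} (hU : Measurable U) (hV : Measurable V) :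
    Tendsto (fun b => (P {ω | U ω < V ω + b}).toReal) (𝓝[>] 0)
      (𝓝 (P {ω | U ω ≤ V ω}).toReal) := by
  have hinter : ⋂ b > (0 : ℝ), {ω | U ω < V ω + b} = {ω | U ω ≤ V ω} := by
    ext ω
    simp only [mem_iInter, mem_ofPred_eq]
    exact le_iff_forall_pos_lt_add.symm
  have h := tendsto_measure_biInter_gt (μ := P) (s := fun b => {ω | U ω < V ω + b}) (a := 0)
    (fun b _ => (measurableSet_lt hU (hV.add_const b)).nullMeasurableSet)
    (fun b b' _ hbb' ω (hω : U ω < V ω + b) => show U ω < V ω + b' by linarith)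
    ⟨1, one_pos, measure_ne_top P _⟩
  rw [hinter] at h
  exact (ENNReal.tendsto_toReal (measure_ne_top P _)).comp h

lemma integrableOn_pow_mul_exp_neg_mul_Ioi (N : ℕ) {r : ℝ} (hr : 0 < r) :
    IntegrableOn (fun x : ℝ => x ^ N * exp (-(r * x))) (Ioi 0) := by
  simpa [Real.rpow_natCast, neg_mul] using
    integrableOn_rpow_mul_exp_neg_mul_rpow (s := N) (by linarith [N.cast_nonneg (α := ℝ)])
      one_pos hr

lemma integral_pow_mul_exp_neg_mul_Ioi (N : ℕ) {r : ℝ} (hr : 0 < r) :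
    ∫ x in Ioi 0, x ^ N * exp (-(r * x)) = N ! / r ^ (N + 1) := by
  have h := integral_rpow_mul_exp_neg_mul_Ioi (a := N + 1) (by positivity) hr
  rw [Real.Gamma_nat_eq_factorial, add_sub_cancel_right, ← Nat.cast_succ, rpow_natCast] at h
  simpa [rpow_natCast, div_eq_inv_mul] using h

lemma Real.Gamma_add_div_Gamma_mul_factorial {m : ℕ} (hm : 0 < m) (r : ℕ) :
    Gamma ((m : ℝ) + r) / (Gamma m * r !) = ((m - 1 + r).choose r : ℝ) := by
  obtain ⟨n, rfl⟩ : ∃ n, m = n + 1 := ⟨m - 1, (Nat.succ_pred_eq_of_pos hm).symm⟩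
  rw [show ((n + 1 : ℕ) : ℝ) + r = ((n + r : ℕ) : ℝ) + 1 by push_cast; ring, Nat.cast_succ,
    Gamma_nat_eq_factorial, Gamma_nat_eq_factorial, Nat.add_sub_cancel, ← Nat.choose_symm_add,
    Nat.cast_add_choose]

-- Erlang density of shape `n + 1` (not `n`) and rate `c`; `nakLaw (n + 1)` has `c = n + 1`.
noncomputable def erlangPDF (n : ℕ) (c x : ℝ) : ℝ := c ^ (n + 1) / n ! * (x ^ n * exp (-(c * x)))

noncomputable def erlangSurvival (n : ℕ) (c t : ℝ) : ℝ :=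
  ∑ k ∈ range (n + 1), exp (-(c * t)) * (c * t) ^ k / k !

lemma erlangPDF_eq_mul (n : ℕ) (c x : ℝ) :
    erlangPDF n c x = c * (exp (-(c * x)) * (c * x) ^ n / n !) := by
  rw [erlangPDF, mul_pow]; ring

lemma erlangPDF_nonneg (n : ℕ) {c x : ℝ} (hc : 0 ≤ c) (hx : 0 ≤ x) : 0 ≤ erlangPDF n c x := by
  unfold erlangPDF; positivity

lemma erlangSurvival_nonneg (n : ℕ) {c t : ℝ} (hc : 0 ≤ c) (ht : 0 ≤ t) :
    0 ≤ erlangSurvival n c t := by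
  unfold erlangSurvival; positivity

lemma integrableOn_erlangPDF (n : ℕ) {c : ℝ} (hc : 0 < c) : IntegrableOn (erlangPDF n c) (Ioi 0) :=
  (integrableOn_pow_mul_exp_neg_mul_Ioi n hc).const_mul _

lemma hasDerivAt_erlangSurvival (n : ℕ) (c t : ℝ) :
    HasDerivAt (erlangSurvival n c) (-erlangPDF n c t) t := by
  have hexp : HasDerivAt (fun y => exp (-(c * y))) (exp (-(c * t)) * -c) t := by
    simpa using ((hasDerivAt_id t).const_mul c).neg.exp
  rw [erlangPDF_eq_mul]
  induction n with
  | zero =>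
    have h0 : erlangSurvival 0 c = fun y => exp (-(c * y)) := by funext y; simp [erlangSurvival]
    rw [h0]
    exact hexp.congr_deriv (by simp [mul_comm])
  | succ n ih =>
    have hlin : HasDerivAt (fun y => c * y) c t := by simpa using (hasDerivAt_id t).const_mul c
    have hterm := (hexp.mul (hlin.pow (n + 1))).div_const ((n + 1)! : ℝ)
    have hsum : erlangSurvival (n + 1) c =
        fun y => erlangSurvival n c y + exp (-(c * y)) * (c * y) ^ (n + 1) / (n + 1)! := by
      funext y; simp only [erlangSurvival, sum_range_succ _ (n + 1)]
    rw [hsum]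
    refine (ih.add hterm).congr_deriv ?_
    simp only [Pi.pow_apply, Nat.add_sub_cancel, Nat.factorial_succ]
    push_cast
    field_simp
    ring

lemma tendsto_erlangSurvival_atTop (n : ℕ) {c : ℝ} (hc : 0 < c) :
    Tendsto (erlangSurvival n c) atTop (𝓝 0) := by
  have hterm (k : ℕ) : Tendsto (fun t => exp (-(c * t)) * (c * t) ^ k / k !) atTop (𝓝 0) := by
    have := ((tendsto_pow_mul_exp_neg_atTop_nhds_zero k).comp
      (tendsto_id.const_mul_atTop hc)).div_const (k ! : ℝ)
    simpa [mul_comm] using this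
  unfold erlangSurvival
  simpa using tendsto_finsetSum (range (n + 1)) fun k _ => hterm k

lemma integral_Ioi_erlangPDF (n : ℕ) {c t : ℝ} (hc : 0 < c) (ht : 0 ≤ t) :
    ∫ x in Ioi t, erlangPDF n c x = erlangSurvival n c t := by
  have h := integral_Ioi_of_hasDerivAt_of_tendsto' (fun x _ => hasDerivAt_erlangSurvival n c x)
    ((integrableOn_erlangPDF n hc).mono_set (Ioi_subset_Ioi ht)).neg
    (tendsto_erlangSurvival_atTop n hc)
  rw [integral_neg] at h
  linarith

lemma erlangPDF_mul_erlangSurvival (n : ℕ) (c A z : ℝ) :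
    erlangPDF n c z * erlangSurvival n c (A * z) = ∑ r ∈ range (n + 1),
      c ^ (n + 1) * (c * A) ^ r / (n ! * r !) * (z ^ (n + r) * exp (-(c * (A + 1) * z))) := by
  rw [erlangPDF, erlangSurvival, mul_sum]
  refine sum_congr rfl fun r _ => ?_
  have hexp : exp (-(c * (A + 1) * z)) = exp (-(c * z)) * exp (-(c * (A * z))) := by
    rw [← exp_add]; ring_nf
  rw [hexp]
  ring

lemma integrableOn_erlangPDF_mul_erlangSurvival (n : ℕ) {c A : ℝ} (hc : 0 < c) (hA : -1 < A) :
    IntegrableOn (fun z => erlangPDF n c z * erlangSurvival n c (A * z)) (Ioi 0) := by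
  have hcA : 0 < c * (A + 1) := mul_pos hc (by linarith)
  simp_rw [erlangPDF_mul_erlangSurvival]
  exact integrable_finsetSum _ fun r _ =>
    (integrableOn_pow_mul_exp_neg_mul_Ioi (n + r) hcA).const_mul _

lemma integral_erlangPDF_mul_erlangSurvival (n : ℕ) {c A : ℝ} (hc : 0 < c) (hA : -1 < A) :
    ∫ z in Ioi 0, erlangPDF n c z * erlangSurvival n c (A * z) =
      ∑ r ∈ range (n + 1), ((n + r).choose r : ℝ) * A ^ r / (A + 1) ^ (n + 1 + r) := by
  have hcA : 0 < c * (A + 1) := mul_pos hc (by linarith)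
  simp_rw [erlangPDF_mul_erlangSurvival]
  rw [integral_finsetSum _ fun r _ =>
    (integrableOn_pow_mul_exp_neg_mul_Ioi (n + r) hcA).const_mul _]
  refine sum_congr rfl fun r _ => ?_
  rw [integral_const_mul, integral_pow_mul_exp_neg_mul_Ioi _ hcA, ← Nat.choose_symm_add,
    Nat.cast_add_choose]
  have : A + 1 ≠ 0 := by linarith
  simp only [mul_pow]
  field_simp
  ring

lemma nakLaw_natCast_succ (n : ℕ) :
    nakLaw ((n + 1 : ℕ) : ℝ) =
      (volume.restrict (Ioi 0)).withDensity fun x => ENNReal.ofReal (erlangPDF n (n + 1) x) := by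
  unfold nakLaw erlangPDF
  congr! 3 with x
  rw [rpow_natCast]
  push_cast
  rw [add_sub_cancel_right, rpow_natCast, Real.Gamma_nat_eq_factorial, neg_mul, mul_assoc]

lemma lintegral_nakLaw_natCast_succ (n : ℕ) {f : ℝ → ENNReal} (hf : Measurable f) :
    ∫⁻ z, f z ∂nakLaw ((n + 1 : ℕ) : ℝ) =
      ∫⁻ z in Ioi 0, ENNReal.ofReal (erlangPDF n (n + 1) z) * f z := by
  rw [nakLaw_natCast_succ,
    lintegral_withDensity_eq_lintegral_mul _ (by unfold erlangPDF; fun_prop) hf]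
  rfl

lemma nakLaw_absolutelyContinuous (m : ℝ) : nakLaw m ≪ volume :=
  (withDensity_absolutelyContinuous _ _).trans Measure.restrict_le_self.absolutelyContinuous

instance (m : ℝ) : SFinite (nakLaw m) := by
  unfold nakLaw; infer_instance

instance (m : ℝ) : NullSingletonClass (nakLaw m) :=
  ⟨fun x => nakLaw_absolutelyContinuous m (measure_singleton x)⟩

lemma nakLaw_ne_zero {m : ℝ} (hm : 0 < m) {s : Set ℝ} (hs : volume (s ∩ Ioi 0) ≠ 0) :
    nakLaw m s ≠ 0 := by
  have hdens (x : ℝ) (hx : 0 < x) :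
      ENNReal.ofReal (m ^ m / Real.Gamma m * x ^ (m - 1) * Real.exp (-m * x)) ≠ 0 := by
    have := Real.Gamma_pos_of_pos hm
    exact (ENNReal.ofReal_pos.mpr (by positivity)).ne'
  rw [nakLaw, Ne, withDensity_apply_eq_zero' (by fun_prop),
    Measure.restrict_apply' measurableSet_Ioi]
  refine fun h => hs (measure_mono_null ?_ h)
  rintro x ⟨hxs, hx⟩
  exact ⟨⟨hdens x hx, hxs⟩, hx⟩

lemma nakLaw_natCast_succ_Ici (n : ℕ) {t : ℝ} (ht : 0 ≤ t) :
    nakLaw ((n + 1 : ℕ) : ℝ) (Ici t) = ENNReal.ofReal (erlangSurvival n (n + 1) t) := by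
  have hc : (0 : ℝ) < n + 1 := by positivity
  rw [← measure_congr Ioi_ae_eq_Ici, nakLaw_natCast_succ, withDensity_apply _ measurableSet_Ioi,
    Measure.restrict_restrict measurableSet_Ioi, Ioi_inter_Ioi, sup_eq_left.mpr ht,
    ← ofReal_integral_eq_lintegral_ofReal
      ((integrableOn_erlangPDF n hc).mono_set (Ioi_subset_Ioi ht))
      ((ae_restrict_iff' measurableSet_Ioi).mpr
        (ae_of_all _ fun x hx => erlangPDF_nonneg n hc.le (ht.trans hx.le))),
    integral_Ioi_erlangPDF n hc ht]

lemma nakLaw_prod_setOf_mul_le {m : ℕ} (hm : 0 < m) {A : ℝ} (hA : 0 ≤ A) :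
    (nakLaw m).prod (nakLaw m) {p : ℝ × ℝ | A * p.2 ≤ p.1} =
      ENNReal.ofReal (∑ r ∈ range m, ((m - 1 + r).choose r : ℝ) * A ^ r / (A + 1) ^ (m + r)) := by
  obtain ⟨n, rfl⟩ : ∃ n, m = n + 1 := ⟨m - 1, (Nat.succ_pred_eq_of_pos hm).symm⟩
  have hc : (0 : ℝ) < n + 1 := by positivity
  have hs : MeasurableSet {p : ℝ × ℝ | A * p.2 ≤ p.1} :=
    measurableSet_le (measurable_snd.const_mul A) measurable_fst
  have hslice (z : ℝ) (hz : z ∈ Set.Ioi 0) :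
      ENNReal.ofReal (erlangPDF n (n + 1) z) * nakLaw ((n + 1 : ℕ) : ℝ) (Ici (A * z)) =
        ENNReal.ofReal (erlangPDF n (n + 1) z * erlangSurvival n (n + 1) (A * z)) := by
    rw [nakLaw_natCast_succ_Ici n (mul_nonneg hA (le_of_lt hz)),
      ENNReal.ofReal_mul (erlangPDF_nonneg n hc.le (le_of_lt hz))]
  have hnonneg : ∀ᵐ z ∂volume.restrict (Ioi 0),
      0 ≤ erlangPDF n (n + 1) z * erlangSurvival n (n + 1) (A * z) :=
    (ae_restrict_iff' measurableSet_Ioi).mpr <| ae_of_all _ fun z (hz : 0 < z) =>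
      mul_nonneg (erlangPDF_nonneg n hc.le hz.le) (erlangSurvival_nonneg n hc.le (by positivity))
  rw [Measure.prod_apply_symm hs,
    lintegral_nakLaw_natCast_succ n (measurable_measure_prodMk_right hs), Nat.add_sub_cancel,
    ← integral_erlangPDF_mul_erlangSurvival n hc (by linarith),
    ofReal_integral_eq_lintegral_ofReal
      (integrableOn_erlangPDF_mul_erlangSurvival n hc (by linarith)) hnonneg]
  exact setLIntegral_congr_fun measurableSet_Ioi hslice

lemma nakLaw_prod_setOf_lt_mul_pos {m A : ℝ} (hm : 0 < m) (hA : 0 < A) :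
    0 < (nakLaw m).prod (nakLaw m) {p : ℝ × ℝ | p.1 < A * p.2} := by
  have hrect : Set.Ioo 0 1 ×ˢ Ioi A⁻¹ ⊆ {p : ℝ × ℝ | p.1 < A * p.2} := by
    rintro ⟨x, z⟩ ⟨hx, hz⟩
    calc x < 1 := hx.2
      _ = A * A⁻¹ := (mul_inv_cancel₀ hA.ne').symm
      _ < A * z := mul_lt_mul_of_pos_left hz hA
  refine (pos_iff_ne_zero.mpr ?_).trans_le (measure_mono hrect)
  rw [Measure.prod_prod]
  refine mul_ne_zero (nakLaw_ne_zero hm ?_) (nakLaw_ne_zero hm ?_)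
  · rw [Ioo_inter_Ioi, max_self, Real.volume_Ioo]; simp
  · rw [Ioi_inter_Ioi, Real.volume_Ioi]; simp

/-- High-SNR outage floor: for i.i.d. Gamma(m,m) gains X, Z and A > 0,
P(X < AZ + B₀) → P(X < AZ) as B₀ → 0⁺, with
P(X < AZ) = 1 − Σ_{r=0}^{m−1} C(m−1+r, r) A^r/(A+1)^{m+r} > 0, and equivalently
P(X ≥ AZ) = Σ_{r=0}^{m−1} Γ(m+r)/(Γ(m) r!) · A^r/(A+1)^{m+r}. -/
theorem outage_floor_high_snr {Ω : Type*} [MeasurableSpace Ω]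
    (P : Measure Ω) [IsProbabilityMeasure P] (m : ℕ) (hm : 0 < m)
    (X Z : Ω → ℝ) (hXmeas : Measurable X) (hZmeas : Measurable Z)
    (hindep : ProbabilityTheory.IndepFun X Z P)
    (hX : Measure.map X P = nakLaw m) (hZ : Measure.map Z P = nakLaw m)
    (A : ℝ) (hA : 0 < A) :
    Tendsto (fun B₀ : ℝ => (P {ω | X ω < A * Z ω + B₀}).toReal)
        (nhdsWithin 0 (Ioi 0)) (nhds ((P {ω | X ω < A * Z ω}).toReal)) ∧
    (P {ω | X ω < A * Z ω}).toReal =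
      1 - ∑ r ∈ Finset.range m,
            ((m - 1 + r).choose r : ℝ) * A ^ r / (A + 1) ^ (m + r) ∧
    0 < (P {ω | X ω < A * Z ω}).toReal ∧
    (P {ω | A * Z ω ≤ X ω}).toReal =
      ∑ r ∈ Finset.range m,
        Real.Gamma ((m : ℝ) + r) / (Real.Gamma m * Nat.factorial r) *
          (A ^ r / (A + 1) ^ (m + r)) := by
  have hlaw (s : Set (ℝ × ℝ)) (hs : MeasurableSet s) :
      P ((fun ω => (X ω, Z ω)) ⁻¹' s) = (nakLaw m).prod (nakLaw m) s := by
    rw [hindep.measure_prodMk_preimage hXmeas hZmeas hs, hX, hZ]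
  have hge : (P {ω | A * Z ω ≤ X ω}).toReal =
      ∑ r ∈ range m, ((m - 1 + r).choose r : ℝ) * A ^ r / (A + 1) ^ (m + r) := by
    rw [show P {ω | A * Z ω ≤ X ω} = _ from
      hlaw _ (measurableSet_le (measurable_snd.const_mul A) measurable_fst),
      nakLaw_prod_setOf_mul_le hm hA.le, ENNReal.toReal_ofReal (by positivity)]
  have hlt : P {ω | X ω < A * Z ω} = (nakLaw m).prod (nakLaw m) {p | p.1 < A * p.2} :=
    hlaw _ (measurableSet_lt measurable_fst (measurable_snd.const_mul A))
  have htie : P {ω | X ω = A * Z ω} = 0 :=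
    (hlaw _ (measurableSet_eq_fun measurable_fst (measurable_snd.const_mul A))).trans
      (Measure.prod_setOf_fst_eq_eq_zero (measurable_const_mul A))
  refine ⟨?_, ?_, ?_, ?_⟩
  · rw [← measure_setOf_le_eq_measure_setOf_lt htie]
    exact tendsto_measure_setOf_lt_add_nhdsGT hXmeas (hZmeas.const_mul A)
  · have hcompl := probReal_add_probReal_compl (μ := P)
      (measurableSet_le (hZmeas.const_mul A) hXmeas)
    rw [show {ω | A * Z ω ≤ X ω}ᶜ = {ω | X ω < A * Z ω} by ext; simp] at hcompl
    simp only [measureReal_def] at hcompl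
    linarith
  · refine ENNReal.toReal_pos ?_ (measure_ne_top P _)
    exact hlt ▸ (nakLaw_prod_setOf_lt_mul_pos (by exact_mod_cast hm) hA).ne'
  · rw [hge]
    exact sum_congr rfl fun r _ => by rw [Real.Gamma_add_div_Gamma_mul_factorial hm, mul_div_assoc]
end
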